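/- arXiv:2411.00250 — 3 statements merged into one kernel-verified Lean document; each statement's English description precedes it below -/
import Mathlib

section
/- For all integers d ≥ 0 and n ≥ d + 1, the rank over ℝ of the matrix W_{n,d} equals C(n−1, d). -/
open Matrix Polynomial

/-- `S(G)`: real symmetric matrices whose off-diagonal zero/nonzero pattern
matches the adjacency of `G`; the diagonal is unconstrained. -/
def Sset {V : Type*} [Fintype V] [DecidableEq V] (G : SimpleGraph V) : Set (Matrix V V ℝ) :=
  {M | M.IsSymm ∧ ∀ u v : V, u ≠ v → (M u v ≠ 0 ↔ G.Adj u v)}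

/-- `q(G)`: the minimum number of distinct eigenvalues over matrices in `S(G)`. -/
noncomputable def minQ {V : Type*} [Fintype V] [DecidableEq V] (G : SimpleGraph V) : ℕ :=
  sInf {k : ℕ | ∃ M ∈ Sset G, (spectrum ℝ M).ncard = k}

/-- The Johnson graph `J(n,d)`: vertices are the `d`-element subsets of an `n`-set,
adjacent iff their symmetric difference has two elements. -/
def Johnson (n d : ℕ) : SimpleGraph {s : Finset (Fin n) // s.card = d} where
  Adj α β := (symmDiff α.1 β.1).card = 2
  symm := by constructor; intro a b h; rwa [symmDiff_comm]
  loopless := by constructor; intro a h; simp [symmDiff_self] at h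

/-- For `d`-subsets `α, β` with `α ∆ β = {i, j}`, `i < j`, this is
`h(α,β) = |{ℓ ∈ α ∩ β : i < ℓ < j}|`. -/
def hjExp {n : ℕ} (α β : Finset (Fin n)) : ℕ :=
  ((α ∩ β).filter (fun l => (∃ i ∈ symmDiff α β, i < l) ∧ ∃ j ∈ symmDiff α β, l < j)).card

/-- The signed adjacency matrix `A_{n,d}` of the Johnson graph `J(n,d)`:
`A(α,β) = (-1)^{h(α,β)}` when `|α ∆ β| = 2` and `0` otherwise. -/
def Ajohnson (n d : ℕ) :
    Matrix {s : Finset (Fin n) // s.card = d} {s : Finset (Fin n) // s.card = d} ℝ :=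
  fun α β => if (symmDiff α.1 β.1).card = 2 then (-1 : ℝ) ^ hjExp α.1 β.1 else 0

/-- The matrix `W_{n,d}`, rows indexed by `d`-subsets and columns by `(d+1)`-subsets of
an `n`-set: `W(α,β) = (-1)^{|{y ∈ β : y < x}|}` when `α ⊆ β` with `β \ α = {x}`, else `0`. -/
def Wj (n d : ℕ) :
    Matrix {s : Finset (Fin n) // s.card = d} {s : Finset (Fin n) // s.card = d + 1} ℝ :=
  fun α β => if α.1 ⊆ β.1 then
      (-1 : ℝ) ^ ((β.1.filter (fun y => ∃ x ∈ β.1 \ α.1, y < x)).card)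
    else 0

/-- `P_{n,d} := W_{n,d} · W_{n,d}ᵀ`. -/
noncomputable def Pj (n d : ℕ) := Wj n d * (Wj n d)ᵀ

/-!
`W_{n,d}` is the matrix of the simplicial boundary map from `(d+1)`-subsets to `d`-subsets of
an `n`-set, so `W_{n,d} W_{n,d+1} = 0` and hence
`rank W_{n,d} + rank W_{n,d+1} ≤ C(n, d+1) = C(n-1, d) + C(n-1, d+1)`.
Coning off the vertex `0` gives an identity submatrix of size `C(n-1, d)`, so
`rank W_{n,d} ≥ C(n-1, d)` for all `d`; the two bounds together pin the rank down.
-/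

open Finset

section
variable {n d : ℕ}

lemma Wj_apply_of_not_subset {α : {s : Finset (Fin n) // s.card = d}}
    {β : {s : Finset (Fin n) // s.card = d + 1}} (h : ¬ α.1 ⊆ β.1) :
    Wj n d α β = 0 := if_neg h

lemma Wj_apply_insert {α : {s : Finset (Fin n) // s.card = d}}
    {β : {s : Finset (Fin n) // s.card = d + 1}} {x : Fin n} (hx : x ∉ α.1)
    (hβ : β.1 = insert x α.1) :
    Wj n d α β = (-1) ^ #{y ∈ α.1 | y < x} := by
  rw [Wj, if_pos (hβ ▸ subset_insert x α.1), hβ, insert_sdiff_cancel hx, filter_insert]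
  simp

/-- The two chains `γ ⊂ γ ∪ {x} ⊂ β` and `γ ⊂ γ ∪ {y} ⊂ β` contribute opposite signs: inserting
`x` first puts one more element below `y`, while inserting `y` first changes nothing below `x`. -/
lemma sum_Wj_mul_Wj_of_sdiff_eq_pair (γ : {s : Finset (Fin n) // s.card = d})
    (β : {s : Finset (Fin n) // s.card = d + 1 + 1}) {x y : Fin n} (hxy : x < y)
    (hγβ : γ.1 ⊆ β.1) (hβγ : β.1 \ γ.1 = {x, y}) :
    ∑ α, Wj n d γ α * Wj n (d + 1) α β = 0 := by
  have hx : x ∉ γ.1 := (mem_sdiff.1 (hβγ ▸ mem_insert_self x {y})).2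
  have hy : y ∉ γ.1 := (mem_sdiff.1 (hβγ ▸ mem_insert_of_mem (mem_singleton_self y))).2
  have hβ : β.1 = insert x (insert y γ.1) := by
    rw [← sdiff_union_of_subset hγβ, hβγ, insert_union, singleton_union]
  let βx : {s : Finset (Fin n) // s.card = d + 1} :=
    ⟨insert x γ.1, by rw [card_insert_of_notMem hx, γ.2]⟩
  let βy : {s : Finset (Fin n) // s.card = d + 1} :=
    ⟨insert y γ.1, by rw [card_insert_of_notMem hy, γ.2]⟩
  have hne : βx ≠ βy := fun h ↦ by
    have hxβy : x ∈ βy.1 := h ▸ mem_insert_self x γ.1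
    exact ((mem_insert.1 hxβy).resolve_right hx).not_lt hxy
  rw [Fintype.sum_eq_add βx βy hne]
  · have hxβy : x ∉ βy.1 := by simp [βy, hxy.ne, hx]
    have hyβx : y ∉ βx.1 := by simp [βx, hxy.ne', hy]
    rw [Wj_apply_insert hx rfl, Wj_apply_insert hy rfl,
      Wj_apply_insert hyβx (by rw [hβ, insert_comm]), Wj_apply_insert hxβy hβ]
    simp only [βx, βy, filter_insert, if_pos hxy, if_neg (lt_asymm hxy),
      card_insert_of_notMem (fun h ↦ hx (mem_filter.1 h).1), pow_succ]
    ring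
  · rintro α ⟨hαx, hαy⟩
    by_cases hγα : γ.1 ⊆ α.1
    · by_cases hαβ : α.1 ⊆ β.1
      · obtain ⟨z, hz, hα⟩ := exists_eq_insert_iff.2 ⟨hγα, by rw [γ.2, α.2]⟩
        have hzβγ : z ∈ β.1 \ γ.1 := mem_sdiff.2 ⟨hαβ (hα ▸ mem_insert_self z γ.1), hz⟩
        rw [hβγ, mem_insert, mem_singleton] at hzβγ
        rcases hzβγ with rfl | rfl
        exacts [(hαx (Subtype.ext hα.symm)).elim, (hαy (Subtype.ext hα.symm)).elim]
      · rw [Wj_apply_of_not_subset hαβ, mul_zero]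
    · rw [Wj_apply_of_not_subset hγα, zero_mul]

end

theorem Wj_mul_Wj_succ (n d : ℕ) : Wj n d * Wj n (d + 1) = 0 := by
  ext γ β
  rw [mul_apply, Matrix.zero_apply]
  by_cases hγβ : γ.1 ⊆ β.1
  · obtain ⟨x, y, hxy, hβγ⟩ : ∃ x y, x ≠ y ∧ β.1 \ γ.1 = {x, y} := by
      rw [← card_eq_two, card_sdiff_of_subset hγβ, β.2, γ.2]; omega
    rcases hxy.lt_or_gt with h | h
    · exact sum_Wj_mul_Wj_of_sdiff_eq_pair γ β h hγβ hβγ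
    · exact sum_Wj_mul_Wj_of_sdiff_eq_pair γ β h hγβ (hβγ.trans (pair_comm x y))
  · refine sum_eq_zero fun α _ ↦ ?_
    by_cases hγα : γ.1 ⊆ α.1
    · rw [Wj_apply_of_not_subset fun hαβ ↦ hγβ (hγα.trans hαβ), mul_zero]
    · rw [Wj_apply_of_not_subset hγα, zero_mul]

lemma Fintype.card_finset_card_eq_and_notMem {α : Type*} [Fintype α] [DecidableEq α] (a : α)
    (d : ℕ) : Fintype.card {s : Finset α // #s = d ∧ a ∉ s} = (Fintype.card α - 1).choose d := by
  rw [Fintype.card_subtype, ← card_univ, ← card_erase_of_mem (mem_univ a), ← card_powersetCard]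
  congr 1
  ext s
  simp [subset_erase, and_comm]

section
variable {n d : ℕ}

theorem choose_le_rank_Wj (hn : 0 < n) : (n - 1).choose d ≤ (Wj n d).rank := by
  let z : Fin n := ⟨0, hn⟩
  let U := {s : Finset (Fin n) // #s = d ∧ z ∉ s}
  let row : U → {s : Finset (Fin n) // #s = d} := fun u ↦ ⟨u.1, u.2.1⟩
  let col : U → {s : Finset (Fin n) // #s = d + 1} := fun u ↦
    ⟨insert z u.1, by rw [card_insert_of_notMem u.2.2, u.2.1]⟩
  have hone : (Wj n d).submatrix row col = 1 := by
    ext u v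
    rw [submatrix_apply]
    by_cases huv : u = v
    · subst huv
      rw [Wj_apply_insert u.2.2 rfl, one_apply_eq, filter_false_of_mem, card_empty, pow_zero]
      exact fun y _ ↦ Nat.not_lt_zero y.val
    · rw [one_apply_ne huv, Wj_apply_of_not_subset]
      intro huv'
      have hsub : u.1 ⊆ v.1 := (subset_insert_iff_of_notMem u.2.2).1 huv'
      exact huv (Subtype.ext (eq_of_subset_of_card_le hsub (by rw [u.2.1, v.2.1])))
  calc (n - 1).choose d = Fintype.card U := by
        rw [Fintype.card_finset_card_eq_and_notMem, Fintype.card_fin]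
    _ = ((Wj n d).submatrix row col).rank := by rw [hone, rank_one]
    _ ≤ (Wj n d).rank := rank_submatrix_le _ _ _

theorem rank_Wj_le (hn : 0 < n) : (Wj n d).rank ≤ (n - 1).choose d := by
  obtain ⟨m, rfl⟩ : ∃ m, n = m + 1 := ⟨n - 1, by omega⟩
  rw [Nat.add_sub_cancel]
  cases d with
  | zero =>
    simpa [Fintype.card_finset_len] using rank_le_card_height (Wj (m + 1) 0)
  | succ d =>
    have hsum := rank_add_rank_le_card_of_mul_eq_zero (Wj_mul_Wj_succ (m + 1) d)
    have hlow : m.choose d ≤ (Wj (m + 1) d).rank := choose_le_rank_Wj hn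
    rw [Fintype.card_finset_len, Fintype.card_fin, Nat.choose_succ_succ'] at hsum
    omega

end

/-- For all integers `d ≥ 0` and `n ≥ d + 1`, the rank over `ℝ` of
`W_{n,d}` equals `C(n−1, d)`. -/
theorem stmt_7 (n d : ℕ) (hn : d + 1 ≤ n) :
    (Wj n d).rank = (n - 1).choose d :=
  le_antisymm (rank_Wj_le (by omega)) (choose_le_rank_Wj (by omega))
end

section
/- Let d ≥ 2 and n ≥ d + 1 be integers. Let M_{n,d} := [P_{n−1,d−1} | W_{n−1,d−1}] be the block matrix whose rows are indexed by the (d−1)-element subsets of {1,…,n−1} and whose columns are indexed by the disjoint union of the (d−1)-element subsets and the d-element subsets of {1,…,n−1}, and set R_{n,d} := M_{n,d}ᵀ · M_{n,d}. Then M_{n,d} · M_{n,d}ᵀ = n · P_{n−1,d−1}, R_{n,d} is positive semidefinite, R_{n,d}² = n(n−1) · R_{n,d}, and rank(R_{n,d}) = C(n−2, d−1); equivalently, the eigenvalues of R_{n,d} are n(n−1) with multiplicity C(n−2, d−1) and 0 with multiplicity C(n,d) − C(n−2, d−1). -/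
open Matrix Polynomial

/-- `M_{n,d} := [P_{n−1,d−1} | W_{n−1,d−1}]`, a block matrix with rows indexed by the
`(d−1)`-subsets of an `(n−1)`-set and columns by the disjoint union of the `(d−1)`-subsets
and the `d`-subsets.  Here `Mj m e = [P_{m,e} | W_{m,e}]`. -/
noncomputable def Mj (m e : ℕ) := Matrix.fromCols (Pj m e) (Wj m e)

/-- `R_{n,d} := M_{n,d}ᵀ · M_{n,d}`.  Here `Rj m e = (Mj m e)ᵀ * Mj m e`. -/
noncomputable def Rj (m e : ℕ) := (Mj m e)ᵀ * Mj m e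

/-!
Write `m = n - 1`, `e = d - 1`, `W = W_{m,e}`, `P = W Wᵀ`, `M = [P | W]` and `R = Mᵀ M`.
The matrices `W_{m,e}` are the coboundary maps of the full simplex on `m` vertices, so
`W_{m,e} W_{m,e+1} = 0`, and the combinatorial Laplacian `W_{m,e}ᵀ W_{m,e} + W_{m,e+1} W_{m,e+1}ᵀ`
is `m • 1` (each `(e+1)`-set has `e + 1` facets and `m - e - 1` cofacets, and the two
off-diagonal contributions cancel). Multiplying the Laplacian identity by `W` gives `P W = m W`,
hence `M Mᵀ = P² + P = (m + 1) P` and `R² = Mᵀ (M Mᵀ) M = (m + 1) m R`. Thus the eigenvalues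
of the positive semidefinite `R` lie in `{0, (m + 1) m}`, and its rank is read off the trace:
`tr R = tr (M Mᵀ) = (m + 1) tr P = (m + 1)(m - e) C(m, e) = (m + 1) m C(m - 1, e)`.
-/

open Finset

section
variable {R ι κ : Type*} [CommRing R] [Fintype ι] [Fintype κ] {A : Matrix ι κ R} {c : R}

theorem Matrix.mul_transpose_mul_eq_smul_of_mul_eq_zero {μ : Type*} [Fintype μ] [DecidableEq κ]
    {B : Matrix κ μ R} (hAB : A * B = 0) (hL : Aᵀ * A + B * Bᵀ = c • 1) :
    A * Aᵀ * A = c • A := by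
  calc A * Aᵀ * A = A * (Aᵀ * A + B * Bᵀ) := by
        rw [Matrix.mul_add, ← Matrix.mul_assoc A B, hAB, Matrix.zero_mul, add_zero,
          Matrix.mul_assoc]
    _ = c • A := by rw [hL, Matrix.mul_smul, Matrix.mul_one]

theorem Matrix.fromCols_mul_transpose_fromCols (hA : A * Aᵀ * A = c • A) :
    fromCols (A * Aᵀ) A * (fromCols (A * Aᵀ) A)ᵀ = (c + 1) • (A * Aᵀ) := by
  rw [transpose_fromCols, fromCols_mul_fromRows, transpose_mul, transpose_transpose,
    ← Matrix.mul_assoc, hA, smul_mul, add_smul, one_smul]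

theorem Matrix.mul_transpose_mul_fromCols (hA : A * Aᵀ * A = c • A) :
    A * Aᵀ * fromCols (A * Aᵀ) A = c • fromCols (A * Aᵀ) A := by
  rw [mul_fromCols, ← Matrix.mul_assoc, hA, smul_mul]
  ext i (j | j) <;> rfl

theorem Matrix.transpose_mul_self_mul_self {M : Matrix ι κ R} {P : Matrix ι ι R} {a b : R}
    (hM : M * Mᵀ = a • P) (hP : P * M = b • M) : Mᵀ * M * (Mᵀ * M) = (a * b) • (Mᵀ * M) := by
  rw [Matrix.mul_assoc, ← Matrix.mul_assoc M, hM, smul_mul, hP, smul_smul, Matrix.mul_smul]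

end

namespace Matrix.IsHermitian
variable {N : Type*} [Fintype N] [DecidableEq N] {A : Matrix N N ℝ} {c : ℝ}

lemma eigenvalues_eq_zero_or_eq (hA : A.IsHermitian) (hsq : A * A = c • A) (i : N) :
    hA.eigenvalues i = 0 ∨ hA.eigenvalues i = c := by
  have hv := hA.mulVec_eigenvectorBasis i
  have hv0 : ⇑(hA.eigenvectorBasis i) ≠ 0 :=
    (WithLp.ofLp_eq_zero 2).ne.2 (hA.eigenvectorBasis.orthonormal.ne_zero i)
  have h : (hA.eigenvalues i * (hA.eigenvalues i - c)) • ⇑(hA.eigenvectorBasis i) = 0 := by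
    rw [mul_sub, sub_smul, ← smul_smul, ← smul_smul, ← hv, ← mulVec_smul, ← hv, mulVec_mulVec,
      hsq, smul_mulVec, hv, smul_comm, sub_self]
  rcases mul_eq_zero.mp ((smul_eq_zero.mp h).resolve_right hv0) with h | h
  · exact .inl h
  · exact .inr (sub_eq_zero.mp h)

lemma apply_eigenvalues_eq_ite {α : Type*} (hA : A.IsHermitian) (hsq : A * A = c • A)
    (g : ℝ → α) (i : N) :
    g (hA.eigenvalues i) = if hA.eigenvalues i ≠ 0 then g c else g 0 := by
  split_ifs with h
  · rw [(hA.eigenvalues_eq_zero_or_eq hsq i).resolve_left h]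
  · rw [not_not.mp h]

lemma trace_eq_mul_rank_of_mul_self_eq_smul (hA : A.IsHermitian) (hsq : A * A = c • A) :
    A.trace = c * A.rank := by
  rw [hA.trace_eq_sum_eigenvalues, hA.rank_eq_card_non_zero_eigs, Fintype.card_subtype]
  simp only [RCLike.ofReal_real_eq_id, id_eq]
  rw [Fintype.sum_congr hA.eigenvalues _ (hA.apply_eigenvalues_eq_ite hsq id), sum_ite, id,
    id, sum_const_zero, add_zero, sum_const, nsmul_eq_mul, mul_comm]

lemma charpoly_eq_of_mul_self_eq_smul (hA : A.IsHermitian) (hsq : A * A = c • A) :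
    A.charpoly = (X - C c) ^ A.rank * X ^ (Fintype.card N - A.rank) := by
  rw [hA.charpoly_eq, hA.rank_eq_card_non_zero_eigs, Fintype.card_subtype]
  simp only [RCLike.ofReal_real_eq_id, id_eq]
  rw [Fintype.prod_congr _ _ (hA.apply_eigenvalues_eq_ite hsq (fun t => X - C t)), prod_ite,
    prod_const, prod_const, map_zero, sub_zero]
  have := card_filter_add_card_filter_not (s := univ) (fun i => hA.eigenvalues i ≠ 0)
  rw [card_univ] at this
  congr 2
  omega

end Matrix.IsHermitian

namespace SimplexBoundary

abbrev CardSubset (m k : ℕ) := {s : Finset (Fin m) // s.card = k}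

variable {m e : ℕ}

def insertSign (α : Finset (Fin m)) (x : Fin m) : ℝ := (-1) ^ #{y ∈ α | y < x}

lemma insertSign_mul_self (α : Finset (Fin m)) (x : Fin m) :
    insertSign α x * insertSign α x = 1 := by
  rw [insertSign, ← pow_add]
  exact Even.neg_one_pow ⟨_, rfl⟩

lemma insertSign_insert_of_lt {α : Finset (Fin m)} {x y : Fin m} (hxy : x < y) (hx : x ∉ α) :
    insertSign (insert x α) y = -insertSign α y := by
  rw [insertSign, insertSign, filter_insert, if_pos hxy,
    card_insert_of_notMem (fun h => hx (mem_of_mem_filter _ h)), pow_succ, mul_neg_one]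

lemma insertSign_insert_of_gt {α : Finset (Fin m)} {x y : Fin m} (hxy : x < y) :
    insertSign (insert y α) x = insertSign α x := by
  rw [insertSign, insertSign, filter_insert, if_neg hxy.not_gt]

lemma insertSign_mul_insertSign_insert_add_swap {α : Finset (Fin m)} {x y : Fin m}
    (hxy : x ≠ y) (hx : x ∉ α) (hy : y ∉ α) :
    insertSign α x * insertSign (insert x α) y + insertSign α y * insertSign (insert y α) x
      = 0 := by
  rcases hxy.lt_or_gt with h | h
  · rw [insertSign_insert_of_lt h hx, insertSign_insert_of_gt h]; ring
  · rw [insertSign_insert_of_lt h hy, insertSign_insert_of_gt h]; ring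

lemma insertSign_mul_insertSign_add_swap {σ : Finset (Fin m)} {a b : Fin m}
    (hab : a ≠ b) (ha : a ∉ σ) (hb : b ∉ σ) :
    insertSign σ a * insertSign σ b + insertSign (insert a σ) b * insertSign (insert b σ) a
      = 0 := by
  rcases hab.lt_or_gt with h | h
  · rw [insertSign_insert_of_lt h ha, insertSign_insert_of_gt h]; ring
  · rw [insertSign_insert_of_lt h hb, insertSign_insert_of_gt h]; ring

lemma Wj_apply_of_not_subset {α : CardSubset m e} {β : CardSubset m (e + 1)} (h : ¬α.1 ⊆ β.1) :
    Wj m e α β = 0 :=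
  if_neg h

lemma subset_of_Wj_ne_zero {α : CardSubset m e} {β : CardSubset m (e + 1)}
    (h : Wj m e α β ≠ 0) : α.1 ⊆ β.1 :=
  not_not.mp (mt Wj_apply_of_not_subset h)

lemma Wj_apply_of_eq_insert {α : CardSubset m e} {β : CardSubset m (e + 1)} {x : Fin m}
    (hx : x ∉ α.1) (hβ : β.1 = insert x α.1) : Wj m e α β = insertSign α.1 x := by
  have hsd : β.1 \ α.1 = {x} := by rw [hβ, insert_sdiff_of_notMem _ hx, sdiff_self]; rfl
  rw [Wj, if_pos (hβ ▸ subset_insert _ _), insertSign, hsd, hβ]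
  congr 2
  ext y
  simp only [mem_filter, mem_insert, mem_singleton, exists_eq_left]
  constructor
  · rintro ⟨rfl | hy, hyx⟩
    · exact absurd hyx (lt_irrefl _)
    · exact ⟨hy, hyx⟩
  · exact fun ⟨hy, hyx⟩ => ⟨Or.inr hy, hyx⟩

lemma Wj_mul_self (α : CardSubset m e) (β : CardSubset m (e + 1)) :
    Wj m e α β * Wj m e α β = if α.1 ⊆ β.1 then 1 else 0 := by
  split_ifs with h
  · obtain ⟨x, hx, hβ⟩ := exists_eq_insert_iff.mpr ⟨h, by rw [α.2, β.2]⟩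
    rw [Wj_apply_of_eq_insert hx hβ.symm, insertSign_mul_self]
  · rw [Wj_apply_of_not_subset h, mul_zero]

lemma card_filter_subset (A : Finset (Fin m)) (k : ℕ) :
    #{γ : CardSubset m k | γ.1 ⊆ A} = (#A).choose k := by
  rw [← card_powersetCard, ← card_map (Function.Embedding.subtype _)]
  congr 1
  ext s
  simp [mem_powersetCard, and_comm]

lemma card_filter_superset {A : Finset (Fin m)} {k : ℕ} (hA : #A = k) :
    #{δ : CardSubset m (k + 1) | A ⊆ δ.1} = m - k := by
  rw [← show #Aᶜ = m - k by rw [card_compl, Fintype.card_fin, hA]]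
  symm
  refine card_bij (fun x hx => ⟨insert x A, by rw [card_insert_of_notMem (mem_compl.mp hx), hA]⟩)
    (fun x _ => mem_filter.mpr ⟨mem_univ _, subset_insert _ _⟩) ?_ ?_
  · intro x hx y _ hxy
    exact (insert_inj (mem_compl.mp hx)).mp (congrArg Subtype.val hxy)
  · intro δ hδ
    obtain ⟨x, hx, hδx⟩ := exists_eq_insert_iff.mpr ⟨(mem_filter.mp hδ).2, by rw [δ.2, hA]⟩
    exact ⟨x, mem_compl.mpr hx, Subtype.ext hδx⟩

lemma exists_eq_insert_insert {α γ : Finset (Fin m)} (h : α ⊆ γ) (hc : #γ = #α + 2) :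
    ∃ x y, x ≠ y ∧ x ∉ α ∧ y ∉ α ∧ γ = insert y (insert x α) := by
  obtain ⟨x, y, hxy, hset⟩ := card_eq_two.mp (show #(γ \ α) = 2 by
    rw [card_sdiff_of_subset h]; omega)
  have hx : x ∈ γ \ α := by simp [hset]
  have hy : y ∈ γ \ α := by simp [hset]
  refine ⟨x, y, hxy, (mem_sdiff.mp hx).2, (mem_sdiff.mp hy).2, ?_⟩
  rw [← union_sdiff_of_subset h, hset]
  ext z
  simp only [mem_union, mem_insert, mem_singleton]
  tauto

lemma Wj_mul_Wj (e : ℕ) : Wj m e * Wj m (e + 1) = 0 := by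
  ext α γ
  rw [mul_apply, Matrix.zero_apply]
  by_cases hsub : α.1 ⊆ γ.1
  · obtain ⟨x, y, hxy, hx, hy, hγ⟩ := exists_eq_insert_insert hsub (by rw [α.2, γ.2])
    let β₁ : CardSubset m (e + 1) := ⟨insert x α.1, by rw [card_insert_of_notMem hx, α.2]⟩
    let β₂ : CardSubset m (e + 1) := ⟨insert y α.1, by rw [card_insert_of_notMem hy, α.2]⟩
    have hβ : β₁ ≠ β₂ := fun h => hxy ((insert_inj hx).mp (congrArg Subtype.val h))
    rw [Fintype.sum_eq_add β₁ β₂ hβ]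
    · rw [Wj_apply_of_eq_insert hx rfl, Wj_apply_of_eq_insert hy rfl,
        Wj_apply_of_eq_insert (α := β₁) (x := y) (by simp [β₁, hy, hxy.symm]) hγ,
        Wj_apply_of_eq_insert (α := β₂) (x := x) (by simp [β₂, hx, hxy])
          (by rw [hγ, insert_comm])]
      exact insertSign_mul_insertSign_insert_add_swap hxy hx hy
    · rintro β ⟨h₁, h₂⟩
      by_contra h
      have hαβ := subset_of_Wj_ne_zero (left_ne_zero_of_mul h)
      have hβγ := subset_of_Wj_ne_zero (right_ne_zero_of_mul h)
      obtain ⟨z, hz, hβz⟩ := exists_eq_insert_iff.mpr ⟨hαβ, by rw [α.2, β.2]⟩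
      have : z ∈ γ.1 := hβγ (hβz ▸ mem_insert_self z α.1)
      rw [hγ, mem_insert, mem_insert] at this
      rcases this with rfl | rfl | h'
      · exact h₂ (Subtype.ext hβz.symm)
      · exact h₁ (Subtype.ext hβz.symm)
      · exact hz h'
  · refine sum_eq_zero fun β _ => ?_
    by_contra h
    exact hsub ((subset_of_Wj_ne_zero (left_ne_zero_of_mul h)).trans
      (subset_of_Wj_ne_zero (right_ne_zero_of_mul h)))

lemma sum_Wj_mul_self_left (α : CardSubset m (e + 1)) :
    ∑ γ : CardSubset m e, Wj m e γ α * Wj m e γ α = e + 1 := by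
  simp_rw [Wj_mul_self]
  rw [sum_boole, card_filter_subset, α.2, Nat.choose_succ_self_right]
  push_cast; ring

lemma sum_Wj_mul_self_right (α : CardSubset m e) :
    ∑ δ, Wj m e α δ * Wj m e α δ = (m - e : ℕ) := by
  simp_rw [Wj_mul_self]
  rw [sum_boole, card_filter_superset α.2]

noncomputable def laplacian (m e : ℕ) : Matrix (CardSubset m (e + 1)) (CardSubset m (e + 1)) ℝ :=
  (Wj m e)ᵀ * Wj m e + Wj m (e + 1) * (Wj m (e + 1))ᵀ

lemma laplacian_apply (α β : CardSubset m (e + 1)) :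
    laplacian m e α β = ∑ γ : CardSubset m e, Wj m e γ α * Wj m e γ β
      + ∑ δ : CardSubset m (e + 2), Wj m (e + 1) α δ * Wj m (e + 1) β δ := by
  simp only [laplacian, Matrix.add_apply, mul_apply, transpose_apply]

lemma laplacian_apply_self (α : CardSubset m (e + 1)) : laplacian m e α α = m := by
  rw [laplacian_apply, sum_Wj_mul_self_left, sum_Wj_mul_self_right]
  have := α.2 ▸ card_le_univ α.1
  rw [Fintype.card_fin] at this
  push_cast [this]
  ring

lemma laplacian_apply_of_card_inter_lt {α β : CardSubset m (e + 1)} (h : #(α.1 ∩ β.1) < e) :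
    laplacian m e α β = 0 := by
  have hunion := card_union_add_card_inter α.1 β.1
  rw [α.2, β.2] at hunion
  rw [laplacian_apply, sum_eq_zero, sum_eq_zero, add_zero]
  · intro δ _
    by_contra hne
    have := card_le_card (union_subset (subset_of_Wj_ne_zero (left_ne_zero_of_mul hne))
      (subset_of_Wj_ne_zero (right_ne_zero_of_mul hne)))
    omega
  · intro γ _
    by_contra hne
    have := card_le_card (subset_inter (subset_of_Wj_ne_zero (left_ne_zero_of_mul hne))
      (subset_of_Wj_ne_zero (right_ne_zero_of_mul hne)))
    omega

/-- Only `γ = σ` and `δ = σ ∪ {a, b}` contribute, with opposite signs. -/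
lemma laplacian_apply_of_eq_insert {α β : CardSubset m (e + 1)}
    {σ : Finset (Fin m)} {a b : Fin m} (hab : a ≠ b) (ha : a ∉ σ) (hb : b ∉ σ)
    (hα : α.1 = insert a σ) (hβ : β.1 = insert b σ) : laplacian m e α β = 0 := by
  have hσ : #σ = e := by have := α.2; rw [hα, card_insert_of_notMem ha] at this; omega
  have hbα : b ∉ α.1 := by simp [hα, hb, hab.symm]
  have haβ : a ∉ β.1 := by simp [hβ, ha, hab]
  let σ' : CardSubset m e := ⟨σ, hσ⟩
  let δ' : CardSubset m (e + 2) := ⟨insert b α.1, by rw [card_insert_of_notMem hbα, α.2]⟩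
  have hδ : δ'.1 = insert a β.1 := by simp only [δ', hα, hβ, insert_comm]
  rw [laplacian_apply, Fintype.sum_eq_single σ', Fintype.sum_eq_single δ',
    Wj_apply_of_eq_insert (β := α) ha hα, Wj_apply_of_eq_insert (β := β) hb hβ,
    Wj_apply_of_eq_insert (β := δ') hbα rfl, Wj_apply_of_eq_insert (β := δ') haβ hδ, hα, hβ]
  · exact insertSign_mul_insertSign_add_swap hab ha hb
  · intro δ hδ'
    by_contra h
    have hαδ := subset_of_Wj_ne_zero (left_ne_zero_of_mul h)
    have hβδ := subset_of_Wj_ne_zero (right_ne_zero_of_mul h)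
    refine hδ' (Subtype.ext (eq_of_subset_of_card_le ?_ (by rw [δ.2, δ'.2])).symm)
    exact insert_subset (hβδ (by simp [hβ])) hαδ
  · intro γ hγ
    by_contra h
    have hγα := subset_of_Wj_ne_zero (left_ne_zero_of_mul h)
    have hγβ := subset_of_Wj_ne_zero (right_ne_zero_of_mul h)
    refine hγ (Subtype.ext (eq_of_subset_of_card_le (fun z hz => ?_) (by rw [γ.2, hσ])))
    have hzα := hγα hz
    have hzβ := hγβ hz
    grind

lemma laplacian_apply_of_ne {α β : CardSubset m (e + 1)} (hαβ : α ≠ β) :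
    laplacian m e α β = 0 := by
  have hle : #(α.1 ∩ β.1) ≤ e := by
    by_contra hlt
    have hα := eq_of_subset_of_card_le (inter_subset_left (s₂ := β.1)) (by rw [α.2]; omega)
    have hβ := eq_of_subset_of_card_le (inter_subset_right (s₁ := α.1)) (by rw [β.2]; omega)
    exact hαβ (Subtype.ext (hα.symm.trans hβ))
  rcases hle.lt_or_eq with hlt | heq
  · exact laplacian_apply_of_card_inter_lt hlt
  obtain ⟨a, ha, hα⟩ := exists_eq_insert_iff.mpr ⟨inter_subset_left, by rw [heq, α.2]⟩
  obtain ⟨b, hb, hβ⟩ := exists_eq_insert_iff.mpr ⟨inter_subset_right, by rw [heq, β.2]⟩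
  refine laplacian_apply_of_eq_insert ?_ ha hb hα.symm hβ.symm
  rintro rfl
  exact hαβ (Subtype.ext (hα.symm.trans hβ))

lemma laplacian_eq_smul_one (e : ℕ) : laplacian m e = (m : ℝ) • 1 := by
  ext α β
  rw [Matrix.smul_apply, smul_eq_mul]
  by_cases hαβ : α = β
  · rw [hαβ, laplacian_apply_self, one_apply_eq, mul_one]
  · rw [laplacian_apply_of_ne hαβ, one_apply_ne hαβ, mul_zero]

lemma Wj_mul_transpose_mul (e : ℕ) : Wj m e * (Wj m e)ᵀ * Wj m e = (m : ℝ) • Wj m e :=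
  mul_transpose_mul_eq_smul_of_mul_eq_zero (Wj_mul_Wj e) (laplacian_eq_smul_one e)

lemma Mj_mul_transpose (e : ℕ) : Mj m e * (Mj m e)ᵀ = ((m : ℝ) + 1) • Pj m e :=
  fromCols_mul_transpose_fromCols (Wj_mul_transpose_mul e)

lemma Rj_mul_self (e : ℕ) : Rj m e * Rj m e = (((m : ℝ) + 1) * m) • Rj m e :=
  transpose_mul_self_mul_self (Mj_mul_transpose e)
    (mul_transpose_mul_fromCols (Wj_mul_transpose_mul e))

lemma posSemidef_Rj (e : ℕ) : (Rj m e).PosSemidef := by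
  rw [Rj, ← conjTranspose_eq_transpose_of_trivial]
  exact posSemidef_conjTranspose_mul_self _

lemma trace_Pj (e : ℕ) : (Pj m e).trace = (m - e : ℕ) * m.choose e := by
  simp only [Pj, trace, diag_apply, mul_apply, transpose_apply, sum_Wj_mul_self_right, sum_const,
    card_univ, Fintype.card_finset_len, Fintype.card_fin, nsmul_eq_mul, mul_comm]

lemma rank_Rj (e : ℕ) (hm : 0 < m) : (Rj m e).rank = (m - 1).choose e := by
  have htrace : (Rj m e).trace = ((m : ℝ) + 1) * ((m - e : ℕ) * m.choose e) := by
    rw [Rj, trace_mul_comm, Mj_mul_transpose, trace_smul, trace_Pj, smul_eq_mul]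
  rw [(posSemidef_Rj e).isHermitian.trace_eq_mul_rank_of_mul_self_eq_smul (Rj_mul_self e)]
    at htrace
  have hchoose := Nat.choose_mul_succ_eq (m - 1) e
  rw [Nat.sub_add_cancel hm] at hchoose
  have h : (m + 1) * m * (Rj m e).rank = (m + 1) * ((m - e) * m.choose e) := by
    exact_mod_cast htrace
  rw [mul_comm (m - e), ← hchoose] at h
  exact Nat.eq_of_mul_eq_mul_left (by positivity) (h.trans (by ring))

end SimplexBoundary

/-- Let `d ≥ 2` and `n ≥ d + 1`.  With `M = M_{n,d} = Mj (n−1) (d−1)`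
and `R = R_{n,d} = Rj (n−1) (d−1)`:  `M·Mᵀ = n·P_{n−1,d−1}`, `R` is positive semidefinite,
`R² = n(n−1)·R`, and `rank(R) = C(n−2, d−1)`; equivalently the eigenvalues of `R` are
`n(n−1)` with multiplicity `C(n−2,d−1)` and `0` with multiplicity `C(n,d) − C(n−2,d−1)`
(stated via the characteristic polynomial). -/
theorem stmt_10 (n d : ℕ) (hd : 2 ≤ d) (hn : d + 1 ≤ n) :
    Mj (n - 1) (d - 1) * (Mj (n - 1) (d - 1))ᵀ = (n : ℝ) • Pj (n - 1) (d - 1) ∧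
    (Rj (n - 1) (d - 1)).PosSemidef ∧
    Rj (n - 1) (d - 1) * Rj (n - 1) (d - 1) = ((n : ℝ) * ((n : ℝ) - 1)) • Rj (n - 1) (d - 1) ∧
    (Rj (n - 1) (d - 1)).rank = (n - 2).choose (d - 1) ∧
    (Rj (n - 1) (d - 1)).charpoly =
      (X - C ((n : ℝ) * ((n : ℝ) - 1))) ^ ((n - 2).choose (d - 1)) *
        X ^ (n.choose d - (n - 2).choose (d - 1)) := by
  obtain ⟨m, rfl⟩ : ∃ m, n = m + 1 := ⟨n - 1, by omega⟩
  obtain ⟨e, rfl⟩ : ∃ e, d = e + 1 := ⟨d - 1, by omega⟩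
  have hsq := SimplexBoundary.Rj_mul_self (m := m) e
  have hrank : (Rj m e).rank = (m - 1).choose e := SimplexBoundary.rank_Rj e (by omega)
  have hcard : Fintype.card (SimplexBoundary.CardSubset m e ⊕ SimplexBoundary.CardSubset m (e + 1))
      = (m + 1).choose (e + 1) := by
    rw [Fintype.card_sum, Fintype.card_finset_len, Fintype.card_finset_len, Fintype.card_fin,
      Nat.choose_succ_succ]
  rw [Nat.add_sub_cancel, Nat.add_sub_cancel, show m + 1 - 2 = m - 1 by omega]
  simp only [Nat.cast_add, Nat.cast_one, add_sub_cancel_right]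
  refine ⟨SimplexBoundary.Mj_mul_transpose e, SimplexBoundary.posSemidef_Rj e, hsq, hrank, ?_⟩
  rw [(SimplexBoundary.posSemidef_Rj e).isHermitian.charpoly_eq_of_mul_self_eq_smul hsq, hrank,
    hcard]
end

section
/- Let d ≥ 1 and n ≥ d + 1 be integers, and let α = {x₁ < x₂ < ⋯ < x_d} be a d-element subset of {1,…,n}. Define the gap sizes z₀(α) = x₁ − 1, z_i(α) = x_{i+1} − x_i − 1 for 1 ≤ i ≤ d−1, and z_d(α) = n − x_d, and set r(α) = Σ_{ℓ=0}^{⌊(d−1)/2⌋} z_{2ℓ+1}(α). Let k₊(α) be the number of d-element subsets β of {1,…,n} with |α △ β| = 2 and h(α,β) even, and k₋(α) the number with |α △ β| = 2 and h(α,β) odd. Then: if d is odd, k₊(α) = (d+1)(n−d)/2 and k₋(α) = (d−1)(n−d)/2; if d is even, k₊(α) = d(n−d)/2 + r(α) and k₋(α) = d(n−d)/2 − r(α). In particular, k₊ and k₋ are constant over all vertices α if and only if d is odd. -/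
open Matrix Polynomial

/-- The gap size `z_i(α)`: the number of non-elements `y` of `α` having exactly `i`
elements of `α` below them (equivalently, for `α = {x₁ < ⋯ < x_d}`, the number of
non-elements lying strictly between `x_i` and `x_{i+1}`, with the conventions
`z₀` = number below `x₁` and `z_d` = number above `x_d`). -/
def gapZ {n : ℕ} (α : Finset (Fin n)) (i : ℕ) : ℕ :=
  (Finset.univ.filter (fun y : Fin n => y ∉ α ∧ (α.filter (fun x => x < y)).card = i)).card

/-- `r(α) = Σ_{ℓ=0}^{⌊(d−1)/2⌋} z_{2ℓ+1}(α)`. -/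
def rJ {n : ℕ} (d : ℕ) (α : Finset (Fin n)) : ℕ :=
  ∑ l ∈ Finset.range ((d - 1) / 2 + 1), gapZ α (2 * l + 1)

/-- `k₊(α)`: the number of `d`-subsets `β` with `|α ∆ β| = 2` and `h(α,β)` even
(the positive degree of `α` in the signed Johnson graph). -/
def kplus (n d : ℕ) (α : {s : Finset (Fin n) // s.card = d}) : ℕ :=
  (Finset.univ.filter (fun β : {s : Finset (Fin n) // s.card = d} =>
    (symmDiff α.1 β.1).card = 2 ∧ Even (hjExp α.1 β.1))).card

/-- `k₋(α)`: the number of `d`-subsets `β` with `|α ∆ β| = 2` and `h(α,β)` odd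
(the negative degree of `α` in the signed Johnson graph). -/
def kminus (n d : ℕ) (α : {s : Finset (Fin n) // s.card = d}) : ℕ :=
  (Finset.univ.filter (fun β : {s : Finset (Fin n) // s.card = d} =>
    (symmDiff α.1 β.1).card = 2 ∧ Odd (hjExp α.1 β.1))).card

/-!
Write `rank s y` for the number of elements of `s` below `y`. The neighbours of `α` are the sets
`insert y (α.erase x)` with `x ∈ α`, `y ∉ α`, and `h` is the number of elements of `α` strictly
between `x` and `y`. Fix `y`, of rank `i`. As `x` runs through the ranks `0, …, d - 1`, `h` runs
through `i - 1, …, 0` and then `0, …, d - 1 - i`, so exactly `⌈i/2⌉ + ⌈(d - i)/2⌉` of the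
exponents are even. This is `(d + 1)/2` for odd `d`, and `d/2 + [i odd]` for even `d`. Summing
over the `n - d` choices of `y` gives `k₊`, and `k₊ + k₋ = d(n - d)`. For even `d`, `r(α)` is the
number of non-elements of odd rank, which is `0` for `{1, …, d}` and positive for
`{1, …, d - 1, d + 1}`.
-/

open Finset

namespace SignedJohnson

section Rank

variable {ι : Type*} [LinearOrder ι] {s : Finset ι} {a b : ι}

def rank (s : Finset ι) (a : ι) : ℕ := #{x ∈ s | x < a}

lemma rank_le_card (s : Finset ι) (a : ι) : rank s a ≤ #s := card_filter_le _ _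

lemma rank_lt_card (ha : a ∈ s) : rank s a < #s :=
  card_lt_card <| filter_ssubset.2 ⟨a, ha, lt_irrefl a⟩

lemma rank_mono (s : Finset ι) : Monotone (rank s) := fun _ _ hab =>
  card_le_card <| monotone_filter_right s fun _ _ h => h.trans_le hab

lemma rank_lt_rank (ha : a ∈ s) (hab : a < b) : rank s a < rank s b := by
  refine card_lt_card <| Finset.ssubset_iff_subset_ne.2
    ⟨monotone_filter_right s fun _ _ h => h.trans hab, fun h => ?_⟩
  have : a ∈ ({x ∈ s | x < b} : Finset ι) := mem_filter.2 ⟨ha, hab⟩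
  rw [← h, mem_filter] at this
  exact lt_irrefl a this.2

lemma rank_lt_rank_iff (ha : a ∈ s) : rank s a < rank s b ↔ a < b :=
  ⟨fun h => lt_of_not_ge fun hba => h.not_ge (rank_mono s hba), rank_lt_rank ha⟩

lemma rank_sub_rank (s : Finset ι) (hab : a ≤ b) :
    rank s b - rank s a = #{x ∈ s | a ≤ x ∧ x < b} := by
  rw [rank, rank, ← card_sdiff_of_subset (monotone_filter_right s fun _ _ h => h.trans_le hab)]
  congr 1
  ext x
  simp only [mem_sdiff, mem_filter, not_and, not_lt]
  exact ⟨fun ⟨⟨hs, hb⟩, ha⟩ => ⟨hs, ha hs, hb⟩,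
    fun ⟨hs, ha, hb⟩ => ⟨⟨hs, hb⟩, fun _ => ha⟩⟩

lemma rank_injOn (s : Finset ι) : Set.InjOn (rank s) s :=
  StrictMonoOn.injOn fun _ ha _ _ hab => rank_lt_rank ha hab

lemma image_rank (s : Finset ι) : s.image (rank s) = range #s := by
  refine eq_of_subset_of_card_le (fun k hk => ?_) ?_
  · obtain ⟨a, ha, rfl⟩ := mem_image.1 hk
    exact mem_range.2 (rank_lt_card ha)
  · rw [card_range, card_image_of_injOn (rank_injOn s)]

lemma card_filter_rank (s : Finset ι) (p : ℕ → Prop) [DecidablePred p] :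
    #{x ∈ s | p (rank s x)} = #{k ∈ range #s | p k} := by
  rw [← image_rank, filter_image, card_image_of_injOn ((rank_injOn s).mono (filter_subset _ _))]

lemma rank_Iio_of_le [LocallyFiniteOrderBot ι] (hab : a ≤ b) : rank (Iio a) b = #(Iio a) := by
  rw [rank, filter_true_of_mem fun x hx => (mem_Iio.1 hx).trans_le hab]

end Rank

lemma card_filter_even_range (m : ℕ) : #{k ∈ range m | Even k} = (m + 1) / 2 := by
  induction m with
  | zero => rfl
  | succ m ih =>
    rw [range_add_one, filter_insert]
    split_ifs with hm
    · rw [card_insert_of_notMem (by simp), ih]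
      have := Nat.even_iff.1 hm
      omega
    · have := Nat.odd_iff.1 (Nat.not_even_iff_odd.1 hm)
      omega

lemma card_filter_even_gap {i d : ℕ} (hid : i ≤ d) :
    #{k ∈ range d | Even (if k < i then i - 1 - k else k - i)}
      = (i + 1) / 2 + (d - i + 1) / 2 := by
  simp only [card_filter, ← sum_range_add_sum_Ico _ hid, sum_Ico_eq_sum_range]
  rw [← card_filter_even_range, ← card_filter_even_range, card_filter, card_filter]
  congr 1
  · rw [← sum_range_reflect]
    refine sum_congr rfl fun k hk => ?_
    have hk : k < i := mem_range.1 hk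
    simp only [show i - 1 - k < i by omega, show i - 1 - (i - 1 - k) = k by omega, if_true]
  · refine sum_congr rfl fun k _ => ?_
    simp only [show ¬i + k < i by omega, if_false, Nat.add_sub_cancel_left]

section Exchange

variable {ι : Type*} [DecidableEq ι] {s t : Finset ι} {x y : ι}

lemma sdiff_insert_erase (hx : x ∈ s) (hy : y ∉ s) : s \ insert y (s.erase x) = {x} := by
  ext l
  simp only [mem_sdiff, mem_insert, mem_erase, mem_singleton]
  constructor
  · rintro ⟨hl, hne⟩
    by_contra h
    exact hne (Or.inr ⟨h, hl⟩)
  · rintro rfl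
    exact ⟨hx, by rintro (rfl | ⟨h, _⟩) <;> trivial⟩

lemma insert_erase_sdiff (hy : y ∉ s) : insert y (s.erase x) \ s = {y} := by
  ext l
  simp only [mem_sdiff, mem_insert, mem_erase, mem_singleton]
  constructor
  · rintro ⟨rfl | ⟨_, hl⟩, hls⟩
    · rfl
    · exact absurd hl hls
  · rintro rfl
    exact ⟨Or.inl rfl, hy⟩

lemma symmDiff_insert_erase (hx : x ∈ s) (hy : y ∉ s) :
    symmDiff s (insert y (s.erase x)) = {x, y} := by
  rw [symmDiff_def, sup_eq_union, sdiff_insert_erase hx hy, insert_erase_sdiff hy]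
  rfl

lemma inter_insert_erase (hy : y ∉ s) : s ∩ insert y (s.erase x) = s.erase x := by
  rw [inter_insert_of_notMem hy, inter_eq_right.2 (erase_subset x s)]

lemma card_insert_erase (hx : x ∈ s) (hy : y ∉ s) : #(insert y (s.erase x)) = #s := by
  rw [card_insert_of_notMem fun h => hy (mem_of_mem_erase h), card_erase_add_one hx]

lemma insert_erase_inj {x' y' : ι} (hx : x ∈ s) (hy : y ∉ s) (hx' : x' ∈ s) (hy' : y' ∉ s)
    (h : insert y (s.erase x) = insert y' (s.erase x')) : x = x' ∧ y = y' := by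
  refine ⟨singleton_injective ?_, singleton_injective ?_⟩
  · rw [← sdiff_insert_erase hx hy, ← sdiff_insert_erase hx' hy', h]
  · rw [← insert_erase_sdiff (x := x) hy, ← insert_erase_sdiff (x := x') hy', h]

lemma exists_eq_insert_erase (hst : #s = #t) (h : #(symmDiff s t) = 2) :
    ∃ x ∈ s, ∃ y ∉ s, t = insert y (s.erase x) := by
  have hsum : #(s \ t) + #(t \ s) = 2 := by
    rw [← card_union_of_disjoint disjoint_sdiff_sdiff, ← sup_eq_union, ← symmDiff_def, h]
  have hcomm : #(s \ t) = #(t \ s) := card_sdiff_comm hst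
  obtain ⟨x, hx⟩ := card_eq_one.1 (show #(s \ t) = 1 by omega)
  obtain ⟨y, hy⟩ := card_eq_one.1 (show #(t \ s) = 1 by omega)
  have hxs : x ∈ s \ t := hx ▸ mem_singleton_self x
  have hyt : y ∈ t \ s := hy ▸ mem_singleton_self y
  refine ⟨x, (mem_sdiff.1 hxs).1, y, (mem_sdiff.1 hyt).2, ?_⟩
  rw [← sdiff_singleton_eq_erase, ← hx, sdiff_sdiff_right_self, inf_eq_inter, insert_eq,
    ← hy, inter_comm, sdiff_union_inter]

end Exchange

lemma card_filter_adj_eq_sum {ι : Type*} [Fintype ι] [DecidableEq ι] {d : ℕ}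
    (α : {s : Finset ι // #s = d}) (p : Finset ι → Prop) [DecidablePred p] :
    #{β : {s : Finset ι // #s = d} | #(symmDiff α.1 β.1) = 2 ∧ p β.1}
      = ∑ y ∈ α.1ᶜ, #{x ∈ α.1 | p (insert y (α.1.erase x))} := by
  have hprod : ∑ y ∈ α.1ᶜ, #{x ∈ α.1 | p (insert y (α.1.erase x))}
      = #{q ∈ α.1 ×ˢ α.1ᶜ | p (insert q.2 (α.1.erase q.1))} := by
    simp only [card_filter, sum_product_right]
  rw [hprod]
  symm
  refine card_bij (fun q hq => ⟨insert q.2 (α.1.erase q.1), ?_⟩) (fun q hq => ?_)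
    (fun q hq q' hq' h => ?_) (fun β hβ => ?_)
  · obtain ⟨⟨hx, hy⟩, -⟩ := by simpa only [mem_filter, mem_product, mem_compl] using hq
    rw [card_insert_erase hx hy, α.2]
  · obtain ⟨⟨hx, hy⟩, hp⟩ := by simpa only [mem_filter, mem_product, mem_compl] using hq
    rw [mem_filter, symmDiff_insert_erase hx hy, card_pair (ne_of_mem_of_not_mem hx hy)]
    exact ⟨mem_univ _, rfl, hp⟩
  · obtain ⟨⟨hx, hy⟩, -⟩ := by simpa only [mem_filter, mem_product, mem_compl] using hq
    obtain ⟨⟨hx', hy'⟩, -⟩ := by simpa only [mem_filter, mem_product, mem_compl] using hq'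
    obtain ⟨h1, h2⟩ := insert_erase_inj hx hy hx' hy' (congrArg Subtype.val h)
    exact Prod.ext h1 h2
  · simp only [mem_filter, mem_univ, true_and] at hβ
    obtain ⟨x, hx, y, hy, hβα⟩ := exists_eq_insert_erase (α.2.trans β.2.symm) hβ.1
    refine ⟨(x, y), ?_, Subtype.ext hβα.symm⟩
    simp only [mem_filter, mem_product, mem_compl]
    exact ⟨⟨hx, hy⟩, hβα ▸ hβ.2⟩

variable {n d : ℕ}

lemma hjExp_insert_erase {s : Finset (Fin n)} {x y : Fin n} (hx : x ∈ s) (hy : y ∉ s) :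
    hjExp s (insert y (s.erase x))
      = if x < y then rank s y - rank s x - 1 else rank s x - rank s y := by
  rw [hjExp, inter_insert_erase hy, symmDiff_insert_erase hx hy]
  simp only [mem_insert, mem_singleton, exists_eq_or_imp, exists_eq_left]
  split_ifs with hlt
  · rw [rank_sub_rank s hlt.le, ← card_erase_of_mem (mem_filter.2 ⟨hx, le_rfl, hlt⟩)]
    congr 1
    ext l
    simp only [mem_filter, mem_erase]
    grind
  · rw [rank_sub_rank s (le_of_not_gt hlt)]
    congr 1
    ext l
    simp only [mem_filter, mem_erase]
    grind

lemma card_filter_even_hjExp {s : Finset (Fin n)} {y : Fin n} (hy : y ∉ s) :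
    #{x ∈ s | Even (hjExp s (insert y (s.erase x)))}
      = (rank s y + 1) / 2 + (#s - rank s y + 1) / 2 := by
  have hgap : ∀ x ∈ s, Even (hjExp s (insert y (s.erase x))) ↔ Even
      (if rank s x < rank s y then rank s y - 1 - rank s x else rank s x - rank s y) := by
    intro x hx
    rw [hjExp_insert_erase hx hy, Nat.sub_right_comm]
    simp only [rank_lt_rank_iff hx]
  rw [filter_congr hgap, card_filter_rank s
    (fun k => Even (if k < rank s y then rank s y - 1 - k else k - rank s y)),
    card_filter_even_gap (rank_le_card s y)]

lemma kplus_eq_sum (α : {s : Finset (Fin n) // s.card = d}) :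
    kplus n d α = ∑ y ∈ α.1ᶜ, ((rank α.1 y + 1) / 2 + (d - rank α.1 y + 1) / 2) := by
  rw [kplus, card_filter_adj_eq_sum α (fun β => Even (hjExp α.1 β))]
  refine sum_congr rfl fun y hy => ?_
  rw [card_filter_even_hjExp (mem_compl.1 hy), α.2]

lemma kplus_add_kminus (α : {s : Finset (Fin n) // s.card = d}) :
    kplus n d α + kminus n d α = (n - d) * d := by
  rw [kplus, kminus, card_filter_adj_eq_sum α (fun β => Even (hjExp α.1 β)),
    card_filter_adj_eq_sum α (fun β => Odd (hjExp α.1 β)), ← sum_add_distrib]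
  simp only [← Nat.not_even_iff_odd, card_filter_add_card_filter_not, α.2, sum_const,
    card_compl, Fintype.card_fin, smul_eq_mul]

lemma rJ_eq_card {s : Finset (Fin n)} (hs : #s ≤ d) :
    rJ d s = #{y ∈ sᶜ | Odd (rank s y)} := by
  rw [card_eq_sum_card_fiberwise (f := fun y => rank s y / 2) (t := range ((d - 1) / 2 + 1))]
  · refine sum_congr rfl fun l _ => ?_
    rw [gapZ, filter_filter]
    congr 1
    ext y
    simp only [mem_filter, mem_univ, mem_compl, true_and, Nat.odd_iff]
    change y ∉ s ∧ rank s y = 2 * l + 1 ↔ _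
    exact and_congr_right fun _ => by omega
  · intro y hy
    have hy := mem_filter.1 (mem_coe.1 hy)
    have := rank_le_card s y
    have := Nat.odd_iff.1 hy.2
    simp only [coe_range, Set.mem_Iio]
    omega

theorem kplus_kminus_of_odd (hd : Odd d) (α : {s : Finset (Fin n) // s.card = d}) :
    kplus n d α = (d + 1) * (n - d) / 2 ∧ kminus n d α = (d - 1) * (n - d) / 2 := by
  obtain ⟨k, rfl⟩ := hd
  have hplus : kplus n (2 * k + 1) α = (n - (2 * k + 1)) * (k + 1) := by
    rw [kplus_eq_sum, sum_congr rfl fun y _ => ?_, sum_const, card_compl, α.2,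
      Fintype.card_fin, smul_eq_mul]
    have := α.2 ▸ rank_le_card α.1 y
    omega
  have htotal := kplus_add_kminus α
  generalize n - (2 * k + 1) = m at hplus htotal ⊢
  rw [show (2 * k + 1 + 1) * m = 2 * (m * (k + 1)) by ring,
    show (2 * k + 1 - 1) * m = 2 * (m * k) by rw [Nat.add_sub_cancel]; ring]
  constructor
  · omega
  · have : m * (2 * k + 1) = m * (k + 1) + m * k := by ring
    omega

theorem kplus_kminus_of_even (hd : Even d) (α : {s : Finset (Fin n) // s.card = d}) :
    kplus n d α = d * (n - d) / 2 + rJ d α.1 ∧ kminus n d α = d * (n - d) / 2 - rJ d α.1 := by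
  obtain ⟨k, rfl⟩ := hd
  have hcompl : (n - (k + k)) * k = ∑ _y ∈ α.1ᶜ, k := by
    rw [sum_const, card_compl, α.2, Fintype.card_fin, smul_eq_mul]
  have hplus : kplus n (k + k) α = (n - (k + k)) * k + rJ (k + k) α.1 := by
    rw [kplus_eq_sum, rJ_eq_card α.2.le, card_filter, hcompl, ← sum_add_distrib]
    refine sum_congr rfl fun y _ => ?_
    have := α.2 ▸ rank_le_card α.1 y
    split_ifs with hodd
    · have := Nat.odd_iff.1 hodd
      omega
    · have := Nat.even_iff.1 (Nat.not_odd_iff_even.1 hodd)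
      omega
  have htotal := kplus_add_kminus α
  rw [show (k + k) * (n - (k + k)) / 2 = (n - (k + k)) * k by
    rw [mul_comm, ← two_mul, mul_left_comm, Nat.mul_div_cancel_left _ two_pos]]
  constructor
  · exact hplus
  · rw [show (n - (k + k)) * (k + k) = (n - (k + k)) * k + (n - (k + k)) * k by ring] at htotal
    omega

lemma rJ_Iio_eq_zero (hd : Even d) {a : Fin n} (ha : (a : ℕ) = d) : rJ d (Iio a) = 0 := by
  rw [rJ_eq_card (by rw [Fin.card_Iio, ha]), card_eq_zero, filter_eq_empty_iff]
  intro y hy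
  rw [rank_Iio_of_le (not_lt.1 (by simpa using hy)), Fin.card_Iio, ha, Nat.not_odd_iff_even]
  exact hd

lemma rJ_insert_erase_Iio_pos (hd : Even d) (hd1 : 1 ≤ d) {a b : Fin n} (ha : (a : ℕ) = d)
    (hb : (b : ℕ) = d - 1) : 0 < rJ d (insert a ((Iio a).erase b)) := by
  have hbIio : b ∈ Iio a := mem_Iio.2 (by rw [Fin.lt_def]; omega)
  have haIio : a ∉ Iio a := notMem_Iio_self
  have hrank : rank (insert a ((Iio a).erase b)) b = d - 1 := by
    rw [rank, ← hb, ← Fin.card_Iio b]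
    congr 1
    ext x
    simp only [mem_filter, mem_insert, mem_erase, mem_Iio, Fin.lt_def, Fin.ext_iff]
    omega
  rw [rJ_eq_card (by rw [card_insert_erase hbIio haIio, Fin.card_Iio, ha]), card_pos]
  refine ⟨b, mem_filter.2 ⟨?_, ?_⟩⟩
  · simp only [mem_compl, mem_insert, mem_erase, not_or, Fin.ext_iff]
    omega
  · rw [hrank]
    obtain ⟨k, rfl⟩ := hd
    exact ⟨k - 1, by omega⟩

lemma exists_rJ_ne (hd : Even d) (hd1 : 1 ≤ d) (hn : d + 1 ≤ n) :
    ∃ α β : {s : Finset (Fin n) // s.card = d}, rJ d α.1 ≠ rJ d β.1 := by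
  let a : Fin n := ⟨d, by omega⟩
  let b : Fin n := ⟨d - 1, by omega⟩
  have hα : #(Iio a) = d := Fin.card_Iio a
  have hβ : #(insert a ((Iio a).erase b)) = d := by
    rw [card_insert_erase (mem_Iio.2 (Fin.mk_lt_mk.2 (by omega))) notMem_Iio_self, hα]
  refine ⟨⟨_, hα⟩, ⟨_, hβ⟩, ?_⟩
  rw [rJ_Iio_eq_zero hd rfl]
  exact (rJ_insert_erase_Iio_pos hd hd1 rfl rfl).ne

end SignedJohnson

open SignedJohnson in
/-- For `d ≥ 1`, `n ≥ d + 1` and any vertex `α` of `J(n,d)`: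
if `d` is odd then `k₊(α) = (d+1)(n−d)/2` and `k₋(α) = (d−1)(n−d)/2`; if `d` is even then
`k₊(α) = d(n−d)/2 + r(α)` and `k₋(α) = d(n−d)/2 − r(α)`.  In particular `k₊` and `k₋` are
constant over all vertices if and only if `d` is odd. -/
theorem stmt_12 (n d : ℕ) (hd : 1 ≤ d) (hn : d + 1 ≤ n) :
    (Odd d → ∀ α : {s : Finset (Fin n) // s.card = d},
      kplus n d α = (d + 1) * (n - d) / 2 ∧ kminus n d α = (d - 1) * (n - d) / 2) ∧
    (Even d → ∀ α : {s : Finset (Fin n) // s.card = d},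
      kplus n d α = d * (n - d) / 2 + rJ d α.1 ∧ kminus n d α = d * (n - d) / 2 - rJ d α.1) ∧
    ((∀ α β : {s : Finset (Fin n) // s.card = d},
      kplus n d α = kplus n d β ∧ kminus n d α = kminus n d β) ↔ Odd d) := by
  refine ⟨kplus_kminus_of_odd, kplus_kminus_of_even,
    ⟨fun hconst => ?_, fun hodd α β => ?_⟩⟩
  · by_contra hodd
    have heven := Nat.not_odd_iff_even.1 hodd
    obtain ⟨α, β, hne⟩ := exists_rJ_ne heven hd hn
    have h := (hconst α β).1
    rw [(kplus_kminus_of_even heven α).1, (kplus_kminus_of_even heven β).1] at h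
    exact hne (Nat.add_left_cancel h)
  · rw [(kplus_kminus_of_odd hodd α).1, (kplus_kminus_of_odd hodd α).2,
      (kplus_kminus_of_odd hodd β).1, (kplus_kminus_of_odd hodd β).2]
    exact ⟨rfl, rfl⟩
end
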